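/- For a P-extendable i-centered incomplete game (N,K,v), every positive extension p can be written as p = m^v({i})·u_{{i}} + Σ_{S ∈ K^c} m^v(S∪{i})·[β_S·u_S + (1−β_S)·u_{S∪{i}}] for some coefficients β_S ∈ [0,1], and conversely every such game is a positive extension. -/

import Mathlib

open Finset

/-- Möbius transform of a (complete) cooperative game `w : 2^N → ℝ`. -/
noncomputable def mobius {α : Type*} [DecidableEq α] (w : Finset α → ℝ) (T : Finset α) : ℝ :=
  ∑ S ∈ T.powerset, (-1 : ℝ) ^ (T.card - S.card) * w S

/-- Möbius transform of an `i`-centered incomplete game `v`, defined for `S ∈ K`,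
where `K = {S : i ∈ S} ∪ {∅}`: `m^v(S) = Σ_{T ⊆ S, T ∈ K} (-1)^{|S \ T|} v(T)`. -/
noncomputable def mobiusK {α : Type*} [DecidableEq α] (i : α) (v : Finset α → ℝ)
    (S : Finset α) : ℝ :=
  ∑ T ∈ S.powerset.filter (fun T => i ∈ T ∨ T = ∅), (-1 : ℝ) ^ ((S \ T).card) * v T

/-- The unanimity game `u_T`. -/
noncomputable def unanimity {α : Type*} [DecidableEq α] (T S : Finset α) : ℝ :=
  if T ⊆ S then 1 else 0

/-!
A game is determined by its Möbius transform, and for `U ∌ i` the Möbius coefficients of `p` at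
`U` and at `U ∪ {i}` add up to the Möbius coefficient at `U` of the game `V ↦ p (V ∪ {i})`. Since
`V ↦ p (V ∪ {i})` only sees the values of `p` on `K`, `p` extends `v` exactly when
`m^p(U) + m^p(U ∪ {i}) = m^v(U ∪ {i})` for every `U ∌ i`. A positive extension therefore splits each
nonnegative mass `m^v(U ∪ {i})` between `U` and `U ∪ {i}`, in the proportion `β_U` for `U`, and
reading `p` off its Möbius transform in the unanimity basis gives the formula. (For `U = ∅` the
mass `m^v({i})` goes entirely to `{i}`, because `m^p(∅) = p(∅) = 0`.)
-/

theorem add_mul_div_add_self_eq {x y : ℝ} (hx : 0 ≤ x) (hy : 0 ≤ y) :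
    (x + y) * (x / (x + y)) = x := by
  rcases (add_nonneg hx hy).eq_or_lt with h | h
  · rw [← h, zero_mul]; linarith
  · field_simp

theorem div_add_self_mem_Icc {x y : ℝ} (hx : 0 ≤ x) (hy : 0 ≤ y) :
    x / (x + y) ∈ Set.Icc (0 : ℝ) 1 :=
  ⟨div_nonneg hx (add_nonneg hx hy), div_le_one_of_le₀ (by linarith) (add_nonneg hx hy)⟩

open Function

section Mobius

variable {α : Type*} [DecidableEq α]

theorem forall_finset_iff_forall_notMem_insert (i : α) {P : Finset α → Prop} :
    (∀ T, P T) ↔ ∀ U, i ∉ U → P U ∧ P (insert i U) := by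
  refine ⟨fun h U _ => ⟨h U, h _⟩, fun h T => ?_⟩
  by_cases hT : i ∈ T
  · simpa only [insert_erase hT] using (h (T.erase i) (notMem_erase i T)).2
  · exact (h T hT).1

theorem mobius_empty (w : Finset α → ℝ) : mobius w ∅ = w ∅ := by
  simp [mobius]

theorem mobius_comp_insert {a : α} {U : Finset α} (ha : a ∉ U) (w : Finset α → ℝ) :
    mobius (fun V => w (insert a V)) U = mobius w U + mobius w (insert a U) := by
  suffices mobius w (insert a U) = -mobius w U + mobius (fun V => w (insert a V)) U by linarith
  rw [mobius, sum_powerset_insert ha, card_insert_of_notMem ha, mobius, mobius, ← sum_neg_distrib]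
  congr 1 <;> refine sum_congr rfl fun V hV => ?_
  · rw [Nat.sub_add_comm (card_le_card (mem_powerset.1 hV)), pow_succ]
    ring
  · rw [card_insert_of_notMem fun h => ha (mem_powerset.1 hV h), Nat.add_sub_add_right]

theorem sum_powerset_mobius (w : Finset α → ℝ) (S : Finset α) :
    ∑ T ∈ S.powerset, mobius w T = w S := by
  induction S using Finset.induction_on generalizing w with
  | empty => simp [mobius_empty]
  | insert a S ha ih =>
    rw [sum_powerset_insert ha, ← sum_add_distrib, ← ih fun V => w (insert a V)]
    exact sum_congr rfl fun V hV =>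
      (mobius_comp_insert (fun h => ha (mem_powerset.1 hV h)) w).symm

theorem eq_zero_of_forall_sum_powerset_eq_zero {M : Type*} [AddCommMonoid M]
    {f : Finset α → M} (h : ∀ S : Finset α, ∑ T ∈ S.powerset, f T = 0) (S : Finset α) :
    f S = 0 := by
  induction S using Finset.strongInduction with
  | H S ih =>
    have hproper : ∑ T ∈ S.powerset.erase S, f T = 0 := sum_eq_zero fun T hT => ih T <|
      Finset.ssubset_iff_subset_ne.2 ⟨mem_powerset.1 (mem_of_mem_erase hT), ne_of_mem_erase hT⟩
    simpa [hproper] using (add_sum_erase _ f (mem_powerset_self S)).trans (h S)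

theorem mobius_eq_iff_eq_sum_powerset {w c : Finset α → ℝ} :
    (∀ T, mobius w T = c T) ↔ ∀ S, w S = ∑ T ∈ S.powerset, c T := by
  refine ⟨fun h S => (sum_powerset_mobius w S).symm.trans (sum_congr rfl fun T _ => h T),
    fun h T => sub_eq_zero.1 ?_⟩
  refine eq_zero_of_forall_sum_powerset_eq_zero (f := fun T => mobius w T - c T) (fun S => ?_) T
  rw [sum_sub_distrib, sum_powerset_mobius, h, sub_self]

theorem sum_powerset_univ_mul_unanimity [Fintype α] (c : Finset α → ℝ) (S : Finset α) :
    ∑ T ∈ (univ : Finset α).powerset, c T * unanimity T S = ∑ T ∈ S.powerset, c T := by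
  simp only [unanimity, mul_ite, mul_one, mul_zero, ← sum_filter]
  congr 1
  ext T
  simp

theorem sum_powerset_univ_eq_sum_powerset_erase [Fintype α] (i : α) (f : Finset α → ℝ) :
    ∑ T ∈ (univ : Finset α).powerset, f T =
      ∑ U ∈ (univ.erase i).powerset, (f U + f (insert i U)) := by
  conv_lhs => rw [← insert_erase (mem_univ i)]
  rw [sum_powerset_insert (notMem_erase i univ), sum_add_distrib]

end Mobius

section Centered

variable {α : Type*} [DecidableEq α] {i : α}

theorem mobiusK_insert {U : Finset α} (hi : i ∉ U) {w : Finset α → ℝ} (hw : w ∅ = 0) :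
    mobiusK i w (insert i U) = mobius (fun V => w (insert i V)) U := by
  have hwithout : ∀ V ∈ U.powerset, (if i ∈ V ∨ V = ∅ then
      (-1 : ℝ) ^ (insert i U \ V).card * w V else 0) = 0 := by
    intro V hV
    split_ifs with hK
    · rw [hK.resolve_left fun h => hi (mem_powerset.1 hV h), hw, mul_zero]
    · rfl
  rw [mobiusK, sum_filter, sum_powerset_insert hi, sum_eq_zero hwithout, zero_add, mobius]
  refine sum_congr rfl fun V hV => ?_
  rw [if_pos (Or.inl (mem_insert_self i V)), insert_sdiff_insert, sdiff_insert_of_notMem hi,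
    card_sdiff_of_subset (mem_powerset.1 hV)]

theorem eq_on_centered_iff {p v : Finset α → ℝ} (hv : v ∅ = 0) :
    (∀ S, (i ∈ S ∨ S = ∅) → p S = v S) ↔
      p ∅ = 0 ∧ ∀ U, i ∉ U → mobius p U + mobius p (insert i U) = mobiusK i v (insert i U) := by
  constructor
  · intro h
    have hinsert : (fun V => p (insert i V)) = fun V => v (insert i V) :=
      funext fun V => h _ (Or.inl (mem_insert_self i V))
    refine ⟨(h ∅ (Or.inr rfl)).trans hv, fun U hU => ?_⟩
    rw [← mobius_comp_insert hU, hinsert, mobiusK_insert hU hv]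
  · rintro ⟨hp, hpair⟩ S (hS | rfl)
    · obtain ⟨U, hU, rfl⟩ : ∃ U, i ∉ U ∧ S = insert i U :=
        ⟨S.erase i, notMem_erase i S, (insert_erase hS).symm⟩
      calc p (insert i U)
          = ∑ V ∈ U.powerset, mobius (fun V => p (insert i V)) V :=
            (sum_powerset_mobius (fun V => p (insert i V)) U).symm
        _ = ∑ V ∈ U.powerset, mobius (fun V => v (insert i V)) V := sum_congr rfl fun V hV => by
          have hV : i ∉ V := fun h => hU (mem_powerset.1 hV h)
          rw [mobius_comp_insert hV, hpair V hV, mobiusK_insert hV hv]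
        _ = v (insert i U) := sum_powerset_mobius (fun V => v (insert i V)) U
    · rw [hp, hv]

theorem pair_sums_iff_exists_split {x M : Finset α → ℝ} (hM : ∀ U, 0 ≤ M U) :
    (x ∅ = 0 ∧ (∀ T, 0 ≤ x T) ∧ ∀ U, i ∉ U → x U + x (insert i U) = M U) ↔
      ∃ β : Finset α → ℝ, (∀ S, i ∉ S → S ≠ ∅ → β S ∈ Set.Icc (0 : ℝ) 1) ∧
        ∀ U, i ∉ U → x U = M U * update β ∅ 0 U ∧ x (insert i U) = M U * (1 - update β ∅ 0 U) := by
  constructor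
  · rintro ⟨hx0, hnonneg, hpair⟩
    have hβ : update (fun U => x U / M U) ∅ 0 = fun U => x U / M U :=
      update_eq_self_iff.2 (by simp [hx0])
    -- where `M U = 0`, the junk value `x U / 0 = 0` is harmless since then `x U = 0`
    refine ⟨fun U => x U / M U, fun U hU _ => ?_, fun U hU => ?_⟩
    · beta_reduce
      rw [← hpair U hU]
      exact div_add_self_mem_Icc (hnonneg U) (hnonneg _)
    · have hsplit := add_mul_div_add_self_eq (hnonneg U) (hnonneg (insert i U))
      simp only [hβ, ← hpair U hU]
      refine ⟨hsplit.symm, ?_⟩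
      rw [mul_one_sub, hsplit]
      ring
  · rintro ⟨β, hβ, hx⟩
    have hβ' : ∀ U, i ∉ U → update β ∅ 0 U ∈ Set.Icc (0 : ℝ) 1 := fun U hU => by
      rcases eq_or_ne U ∅ with rfl | hne
      · simp
      · rw [update_of_ne hne]
        exact hβ U hU hne
    refine ⟨by rw [(hx ∅ (notMem_empty i)).1, update_self, mul_zero],
      (forall_finset_iff_forall_notMem_insert i).2 fun U hU => ?_, fun U hU => ?_⟩
    · rw [(hx U hU).1, (hx U hU).2]
      exact ⟨mul_nonneg (hM U) (hβ' U hU).1, mul_nonneg (hM U) (sub_nonneg.2 (hβ' U hU).2)⟩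
    · rw [(hx U hU).1, (hx U hU).2]
      ring

variable [Fintype α]

theorem eq_sum_unanimity_centered_iff {p a b : Finset α → ℝ} :
    (∀ S, p S = ∑ U ∈ (univ.erase i).powerset,
        (a U * unanimity U S + b U * unanimity (insert i U) S)) ↔
      ∀ U, i ∉ U → mobius p U = a U ∧ mobius p (insert i U) = b U := by
  set c : Finset α → ℝ := fun T => if i ∈ T then b (T.erase i) else a T
  have hc : ∀ U, i ∉ U → c U = a U ∧ c (insert i U) = b U := fun U hU => by
    simp [c, hU]
  have hsum : ∀ S, ∑ U ∈ (univ.erase i).powerset,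
      (a U * unanimity U S + b U * unanimity (insert i U) S) = ∑ T ∈ S.powerset, c T := by
    intro S
    rw [← sum_powerset_univ_mul_unanimity c S, sum_powerset_univ_eq_sum_powerset_erase i]
    refine sum_congr rfl fun U hU => ?_
    have hU : i ∉ U := fun h => notMem_erase i univ (mem_powerset.1 hU h)
    rw [(hc U hU).1, (hc U hU).2]
  simp_rw [hsum, ← mobius_eq_iff_eq_sum_powerset]
  rw [forall_finset_iff_forall_notMem_insert i]
  exact forall₂_congr fun U hU => by rw [(hc U hU).1, (hc U hU).2]

theorem sum_mass_split_eq (m β : Finset α → ℝ) (S : Finset α) :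
    m {i} * unanimity {i} S +
        ∑ T ∈ (univ : Finset α).powerset.filter (fun T => i ∉ T ∧ T ≠ ∅),
          m (insert i T) * (β T * unanimity T S + (1 - β T) * unanimity (insert i T) S) =
      ∑ U ∈ (univ.erase i).powerset,
        (m (insert i U) * update β ∅ 0 U * unanimity U S +
          m (insert i U) * (1 - update β ∅ 0 U) * unanimity (insert i U) S) := by
  have hsupport : (univ : Finset α).powerset.filter (fun T => i ∉ T ∧ T ≠ ∅) =
      (univ.erase i).powerset.erase ∅ := by
    ext T
    simp [subset_erase, and_comm]
  rw [hsupport, ← add_sum_erase _ _ (empty_mem_powerset _)]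
  congr 1
  · simp
  · refine sum_congr rfl fun U hU => ?_
    rw [update_of_ne (ne_of_mem_erase hU)]
    ring

end Centered

/-- For a P-extendable `i`-centered incomplete game `(N,K,v)`, a game `p` is a positive
extension iff `p = m^v({i})·u_{{i}} + Σ_{S ∈ K^c} m^v(S∪{i})·[β_S·u_S + (1-β_S)·u_{S∪{i}}]`
for some coefficients `β_S ∈ [0,1]`. -/
theorem stmt3 {α : Type*} [Fintype α] [DecidableEq α] (i : α) (v : Finset α → ℝ)
    (hv : v ∅ = 0) (hpos : ∀ S : Finset α, (i ∈ S ∨ S = ∅) → 0 ≤ mobiusK i v S)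
    (p : Finset α → ℝ) :
    (p ∅ = 0 ∧ (∀ T : Finset α, 0 ≤ mobius p T) ∧
        (∀ S : Finset α, (i ∈ S ∨ S = ∅) → p S = v S)) ↔
      (∃ β : Finset α → ℝ, (∀ S : Finset α, i ∉ S → S ≠ ∅ → β S ∈ Set.Icc (0 : ℝ) 1) ∧
        ∀ S : Finset α,
          p S = mobiusK i v {i} * unanimity {i} S +
            ∑ T ∈ (Finset.univ : Finset α).powerset.filter (fun T => i ∉ T ∧ T ≠ ∅),
              mobiusK i v (insert i T) *
                (β T * unanimity T S + (1 - β T) * unanimity (insert i T) S)) := by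
  have hmass : ∀ U, 0 ≤ mobiusK i v (insert i U) := fun U => hpos _ (Or.inl (mem_insert_self i U))
  simp_rw [eq_on_centered_iff hv, sum_mass_split_eq, eq_sum_unanimity_centered_iff,
    ← pair_sums_iff_exists_split hmass, mobius_empty]
  tauto
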